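/- arXiv:1212.5666 — 4 statements merged into one kernel-verified Lean document; each statement's English description precedes it below -/
import Mathlib

section
/- Let (X, 𝓑, μ) be a measure space embedded in a measure space (Y, 𝓒, λ), and let p ∈ Y \ X be a point such that every C ∈ 𝓒 containing p satisfies C ∩ X ≠ ∅. Then 𝓤ₚ = {C ∩ X : p ∈ C ∈ 𝓒} is an ultrafilter in 𝓑 with the countable intersection property. -/
open Set MeasureTheory

/-- A filter in the family `S` (the σ-algebra, viewed as a set of sets):
a nonempty collection of nonempty members of `S`, closed under finite
intersections and upward closed in `S`. -/
def IsMFilter {α : Type*} (S F : Set (Set α)) : Prop :=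
  F.Nonempty ∧ F ⊆ S ∧ ∅ ∉ F ∧
    (∀ A ∈ F, ∀ B ∈ F, A ∩ B ∈ F) ∧
    (∀ A ∈ F, ∀ B ∈ S, A ⊆ B → B ∈ F)

/-- An ultrafilter in `S`: a maximal filter in `S` with respect to inclusion. -/
def IsMUltrafilter {α : Type*} (S F : Set (Set α)) : Prop :=
  IsMFilter S F ∧ ∀ G : Set (Set α), IsMFilter S G → F ⊆ G → G = F

/-- Countable intersection property. -/
def HasCIP {α : Type*} (F : Set (Set α)) : Prop :=
  ∀ f : ℕ → Set α, (∀ n, f n ∈ F) → (⋂ n, f n).Nonempty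

/-- A family of sets is free if it has empty intersection. -/
def IsFree {α : Type*} (F : Set (Set α)) : Prop := ⋂₀ F = ∅

/- The sets `C ∩ X` with `p ∈ C` are the trace on `X` of the Dirac ultrafilter of measurable sets
at `p`. The hypothesis that every measurable neighbourhood of `p` meets `X` keeps the trace away
from `∅`, and then countable intersections are inherited from the σ-algebra on `Y`. Maximality
holds because for measurable `C` either `C` or `Cᶜ` contains `p`, and the two traces are
disjoint. -/

theorem IsMFilter.not_disjoint {α : Type*} {S F : Set (Set α)} (hF : IsMFilter S F)
    {A B : Set α} (hA : A ∈ F) (hB : B ∈ F) : ¬Disjoint A B := fun hAB =>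
  hF.2.2.1 (hAB.inter_eq ▸ hF.2.2.2.1 A hA B hB)

section Trace

variable {Y : Type*} [MeasurableSpace Y]

def traceSets (X : Set Y) : Set (Set Y) :=
  {B | ∃ C : Set Y, MeasurableSet C ∧ B = C ∩ X}

def traceAt (X : Set Y) (p : Y) : Set (Set Y) :=
  {B | ∃ C : Set Y, MeasurableSet C ∧ p ∈ C ∧ B = C ∩ X}

variable {X : Set Y} {p : Y}

theorem isMFilter_traceAt (hpX : ∀ C : Set Y, MeasurableSet C → p ∈ C → (C ∩ X).Nonempty) :
    IsMFilter (traceSets X) (traceAt X p) := by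
  refine ⟨⟨X, univ, MeasurableSet.univ, trivial, (univ_inter X).symm⟩, ?_, ?_, ?_, ?_⟩
  · rintro B ⟨C, hC, -, rfl⟩
    exact ⟨C, hC, rfl⟩
  · rintro ⟨C, hC, hpC, hCX⟩
    simpa [← hCX] using hpX C hC hpC
  · rintro - ⟨C, hC, hpC, rfl⟩ - ⟨D, hD, hpD, rfl⟩
    exact ⟨C ∩ D, hC.inter hD, ⟨hpC, hpD⟩, by rw [inter_inter_inter_comm, inter_self]⟩
  · rintro - ⟨C, hC, hpC, rfl⟩ - ⟨D, hD, rfl⟩ hCD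
    refine ⟨D ∪ C, hD.union hC, Or.inr hpC, ?_⟩
    rw [union_inter_distrib_right, union_eq_self_of_subset_right hCD]

theorem traceAt_maximal {G : Set (Set Y)} (hG : IsMFilter (traceSets X) G)
    (hFG : traceAt X p ⊆ G) : G = traceAt X p := by
  refine Subset.antisymm (fun B hB => ?_) hFG
  obtain ⟨C, hC, rfl⟩ := hG.2.1 hB
  by_cases hpC : p ∈ C
  · exact ⟨C, hC, hpC, rfl⟩
  · have hCcX : Cᶜ ∩ X ∈ G := hFG ⟨Cᶜ, hC.compl, hpC, rfl⟩
    have hdisj : Disjoint (C ∩ X) (Cᶜ ∩ X) :=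
      disjoint_compl_right.mono inter_subset_left inter_subset_left
    exact absurd hdisj (hG.not_disjoint hB hCcX)

theorem hasCIP_traceAt (hpX : ∀ C : Set Y, MeasurableSet C → p ∈ C → (C ∩ X).Nonempty) :
    HasCIP (traceAt X p) := by
  intro f hf
  choose C hC hpC hfC using hf
  obtain ⟨y, hyC, hyX⟩ := hpX _ (MeasurableSet.iInter hC) (mem_iInter.2 hpC)
  exact ⟨y, mem_iInter.2 fun n => hfC n ▸ ⟨mem_iInter.1 hyC n, hyX⟩⟩

end Trace

theorem stmt7_general {Y : Type*} [MeasurableSpace Y] (X : Set Y)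
    (p : Y)
    (hpX : ∀ C : Set Y, MeasurableSet C → p ∈ C → (C ∩ X).Nonempty) :
    IsMUltrafilter {B : Set Y | ∃ C : Set Y, MeasurableSet C ∧ B = C ∩ X}
        {B : Set Y | ∃ C : Set Y, MeasurableSet C ∧ p ∈ C ∧ B = C ∩ X} ∧
      HasCIP {B : Set Y | ∃ C : Set Y, MeasurableSet C ∧ p ∈ C ∧ B = C ∩ X} :=
  ⟨⟨isMFilter_traceAt hpX, fun _ => traceAt_maximal⟩, hasCIP_traceAt hpX⟩

theorem stmt7 {Y : Type*} [MeasurableSpace Y] (X : Set Y)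
    (μ : Measure X) (lam : Measure Y)
    (hemb : ∀ C : Set Y, MeasurableSet C → μ (Subtype.val ⁻¹' C) = lam C)
    (p : Y) (hp : p ∉ X)
    (hpX : ∀ C : Set Y, MeasurableSet C → p ∈ C → (C ∩ X).Nonempty) :
    IsMUltrafilter {B : Set Y | ∃ C : Set Y, MeasurableSet C ∧ B = C ∩ X}
        {B : Set Y | ∃ C : Set Y, MeasurableSet C ∧ p ∈ C ∧ B = C ∩ X} ∧
      HasCIP {B : Set Y | ∃ C : Set Y, MeasurableSet C ∧ p ∈ C ∧ B = C ∩ X} :=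
  stmt7_general X p hpX
end

section
/- Let (X, 𝓑) be embedded in (Y, 𝓒) (X ⊆ Y and 𝓑 = {C ∩ X : C ∈ 𝓒}) with Y \ X countable. If there is no free ultrafilter in 𝓑 with the countable intersection property, then there is no free ultrafilter in 𝓒 with the countable intersection property. -/
/-! A free ultrafilter `F` with the countable intersection property cannot be pinned down to
countably many points: for any countable `s`, every countable intersection of members of `F`
contains a point outside `s` (intersect with, for each point of `s`, a member of `F` missing it).
Taking `s = Y \ X`, every member of `F` meets `X`, so the traces `C ∩ X`, `C ∈ F`, form a filter
in the trace σ-algebra; it is maximal because a measurable `D` meeting every member of an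
ultrafilter belongs to it, and it inherits freeness and, by the same argument, the countable
intersection property. -/

open Set MeasureTheory

section

variable {α : Type*}

def traceFamily (X : Set α) (F : Set (Set α)) : Set (Set α) := {B | ∃ C ∈ F, B = C ∩ X}

theorem HasCIP.exists_mem_iInter_notMem {F : Set (Set α)} (hcip : HasCIP F) (hfree : IsFree F)
    (hinter : ∀ A ∈ F, ∀ B ∈ F, A ∩ B ∈ F) {f : ℕ → Set α} (hf : ∀ n, f n ∈ F) {s : Set α}
    (hs : s.Countable) : ∃ x ∈ ⋂ n, f n, x ∉ s := by
  have hmiss : ∀ y, ∃ A ∈ F, y ∉ A := fun y => by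
    simpa [IsFree, sInter_eq_empty_iff] using congrArg (y ∈ ·) hfree
  choose g hgF hg using hmiss
  have : Nonempty α := (hcip f hf).to_subtype.map Subtype.val
  obtain ⟨e, hse⟩ := countable_iff_exists_subset_range.1 hs
  obtain ⟨x, hx⟩ := hcip (fun n => f n ∩ g (e n)) fun n => hinter _ (hf n) _ (hgF _)
  refine ⟨x, mem_iInter.2 fun n => (mem_iInter.1 hx n).1, fun hxs => ?_⟩
  obtain ⟨k, rfl⟩ := hse hxs
  exact hg _ (mem_iInter.1 hx k).2

theorem IsMUltrafilter.mem_of_forall_inter_nonempty {S F : Set (Set α)}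
    (hS : ∀ A ∈ S, ∀ B ∈ S, A ∩ B ∈ S) (hF : IsMUltrafilter S F) {A : Set α} (hA : A ∈ S)
    (hmeet : ∀ C ∈ F, (A ∩ C).Nonempty) : A ∈ F := by
  obtain ⟨⟨hne, hsub, -, hinter, -⟩, hmax⟩ := hF
  let G : Set (Set α) := {B ∈ S | ∃ C ∈ F, A ∩ C ⊆ B}
  have hFG : F ⊆ G := fun C hC => ⟨hsub hC, C, hC, inter_subset_right⟩
  have hG : IsMFilter S G := by
    refine ⟨hne.mono hFG, fun B hB => hB.1, ?_, ?_, ?_⟩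
    · rintro ⟨-, C, hC, hAC⟩
      exact (hmeet C hC).ne_empty (subset_empty_iff.1 hAC)
    · rintro B ⟨hBS, C, hC, hBC⟩ B' ⟨hB'S, C', hC', hB'C'⟩
      exact ⟨hS _ hBS _ hB'S, C ∩ C', hinter _ hC _ hC',
        fun x hx => ⟨hBC ⟨hx.1, hx.2.1⟩, hB'C' ⟨hx.1, hx.2.2⟩⟩⟩
    · rintro B ⟨-, C, hC, hBC⟩ B' hB'S hBB'
      exact ⟨hB'S, C, hC, hBC.trans hBB'⟩
  rw [← hmax G hG hFG]
  exact ⟨hA, hne.some, hne.some_mem, inter_subset_left⟩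

theorem IsMUltrafilter.traceFamily {S F : Set (Set α)} (hS : ∀ A ∈ S, ∀ B ∈ S, A ∩ B ∈ S)
    (hF : IsMUltrafilter S F) {X : Set α} (hX : ∀ C ∈ F, (C ∩ X).Nonempty) :
    IsMUltrafilter (traceFamily X S) (traceFamily X F) := by
  have hmem : ∀ D ∈ S, (∀ E ∈ F, (D ∩ E ∩ X).Nonempty) → D ∈ F := fun D hD hDE =>
    hF.mem_of_forall_inter_nonempty hS hD fun E hE => (hDE E hE).mono inter_subset_left
  obtain ⟨⟨hne, hsub, -, hinter, -⟩, -⟩ := hF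
  refine ⟨⟨?_, ?_, ?_, ?_, ?_⟩, ?_⟩
  · obtain ⟨C, hC⟩ := hne
    exact ⟨C ∩ X, C, hC, rfl⟩
  · rintro B ⟨C, hC, rfl⟩
    exact ⟨C, hsub hC, rfl⟩
  · rintro ⟨C, hC, hCX⟩
    exact (hX C hC).ne_empty hCX.symm
  · rintro B ⟨C, hC, rfl⟩ B' ⟨C', hC', rfl⟩
    exact ⟨C ∩ C', hinter _ hC _ hC', by rw [inter_inter_inter_comm, inter_self]⟩
  · rintro B ⟨C, hC, rfl⟩ B' ⟨D, hD, rfl⟩ hCD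
    refine ⟨D, hmem D hD fun E hE => ?_, rfl⟩
    obtain ⟨x, ⟨hxE, hxC⟩, hxX⟩ := hX (E ∩ C) (hinter _ hE _ hC)
    exact ⟨x, ⟨(hCD ⟨hxC, hxX⟩).1, hxE⟩, hxX⟩
  · rintro H ⟨-, hHsub, hHempty, hHinter, -⟩ hGH
    refine Subset.antisymm (fun B hB => ?_) hGH
    obtain ⟨D, hD, rfl⟩ := hHsub hB
    refine ⟨D, hmem D hD fun E hE => ?_, rfl⟩
    obtain ⟨x, hx⟩ := nonempty_iff_ne_empty.2 fun h =>
      hHempty (h ▸ hHinter _ hB _ (hGH ⟨E, hE, rfl⟩))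
    exact ⟨x, ⟨hx.1.1, hx.2.1⟩, hx.1.2⟩

theorem IsFree.traceFamily {F : Set (Set α)} (hfree : IsFree F) (X : Set α) :
    IsFree (traceFamily X F) :=
  subset_empty_iff.1 <| hfree ▸ fun _ hy C hC => (hy (C ∩ X) ⟨C, hC, rfl⟩).1

theorem HasCIP.traceFamily {F : Set (Set α)} (hcip : HasCIP F) (hfree : IsFree F)
    (hinter : ∀ A ∈ F, ∀ B ∈ F, A ∩ B ∈ F) {X : Set α} (hX : Xᶜ.Countable) :
    HasCIP (traceFamily X F) := by
  intro f hf
  choose c hcF hc using hf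
  obtain ⟨x, hxc, hxX⟩ := hcip.exists_mem_iInter_notMem hfree hinter hcF hX
  exact ⟨x, mem_iInter.2 fun n => hc n ▸ ⟨mem_iInter.1 hxc n, not_not.1 hxX⟩⟩

end

theorem stmt12 {Y : Type*} [MeasurableSpace Y] (X : Set Y)
    (hco : (Xᶜ : Set Y).Countable)
    (h : ¬ ∃ F : Set (Set Y),
        IsMUltrafilter {B : Set Y | ∃ C : Set Y, MeasurableSet C ∧ B = C ∩ X} F ∧
        IsFree F ∧ HasCIP F) :
    ¬ ∃ F : Set (Set Y), IsMUltrafilter {C : Set Y | MeasurableSet C} F ∧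
        IsFree F ∧ HasCIP F := by
  rintro ⟨F, hF, hfree, hcip⟩
  have hinter : ∀ A ∈ F, ∀ B ∈ F, A ∩ B ∈ F := hF.1.2.2.2.1
  have hmeet : ∀ C ∈ F, (C ∩ X).Nonempty := fun C hC => by
    obtain ⟨x, hxC, hxX⟩ :=
      hcip.exists_mem_iInter_notMem hfree hinter (f := fun _ => C) (fun _ => hC) hco
    exact ⟨x, mem_iInter.1 hxC 0, not_not.1 hxX⟩
  exact h ⟨_, hF.traceFamily (fun _ hA _ hB => MeasurableSet.inter hA hB) hmeet,
    hfree.traceFamily X, hcip.traceFamily hfree hinter hco⟩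
end

section
/- Let (X, 𝓑) and (Y, 𝓒) be measurable spaces with singletons measurable, let 𝓕 be a free ultrafilter in 𝓑 with the countable intersection property, and fix y ∈ Y. Then any ultrafilter 𝓗 in the product σ-algebra 𝓑 × 𝓒 containing {F × {y} : F ∈ 𝓕} is free and has the countable intersection property. -/
open Set MeasureTheory

/-!
Every member `S` of `𝓗` has its `y`-section in `𝓕`: otherwise, since `𝓕` is an ultrafilter,
the complement of the section lies in `𝓕`, so (complement) × `{y}` lies in `𝓗`, and it is disjoint
from `S`. Hence the sections of countably many members of `𝓗` have a common point `x`, and `(x, y)`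
lies in all of them. Freeness passes from `𝓕` to `𝓗` through the sets `A × {y}`.
-/

section Ultrafilter

variable {α : Type*} [MeasurableSpace α] {F : Set (Set α)}

theorem IsMFilter.generate_inter {B : Set α} (hF : IsMFilter {s : Set α | MeasurableSet s} F)
    (hB : MeasurableSet B) (hmeet : ∀ A ∈ F, (A ∩ B).Nonempty) :
    IsMFilter {s : Set α | MeasurableSet s} {C | MeasurableSet C ∧ ∃ A ∈ F, A ∩ B ⊆ C} := by
  obtain ⟨⟨A₀, hA₀⟩, -, -, hFinter, -⟩ := hF
  refine ⟨⟨B, hB, A₀, hA₀, inter_subset_right⟩, fun C hC => hC.1, ?_, ?_, ?_⟩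
  · rintro ⟨-, A, hA, hAB⟩
    exact (hmeet A hA).ne_empty (subset_empty_iff.1 hAB)
  · rintro C₁ ⟨hC₁, A₁, hA₁, hs₁⟩ C₂ ⟨hC₂, A₂, hA₂, hs₂⟩
    exact ⟨hC₁.inter hC₂, A₁ ∩ A₂, hFinter A₁ hA₁ A₂ hA₂,
      fun x hx => ⟨hs₁ ⟨hx.1.1, hx.2⟩, hs₂ ⟨hx.1.2, hx.2⟩⟩⟩
  · rintro C ⟨-, A, hA, hs⟩ D hD hCD
    exact ⟨hD, A, hA, hs.trans hCD⟩

theorem IsMUltrafilter.mem_or_compl_mem (hF : IsMUltrafilter {s : Set α | MeasurableSet s} F)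
    {B : Set α} (hB : MeasurableSet B) : B ∈ F ∨ Bᶜ ∈ F := by
  obtain ⟨hFfil, hFmax⟩ := hF
  by_cases hdisj : ∃ A ∈ F, A ∩ B = ∅
  · right
    obtain ⟨A, hA, hAB⟩ := hdisj
    exact hFfil.2.2.2.2 A hA Bᶜ hB.compl fun x hxA hxB => hAB.subset ⟨hxA, hxB⟩
  · left
    have hmeet : ∀ A ∈ F, (A ∩ B).Nonempty :=
      fun A hA => nonempty_iff_ne_empty.2 fun hAB => hdisj ⟨A, hA, hAB⟩
    have hFG : F ⊆ {C | MeasurableSet C ∧ ∃ A ∈ F, A ∩ B ⊆ C} :=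
      fun A hA => ⟨hFfil.2.1 hA, A, hA, inter_subset_left⟩
    rw [← hFmax _ (hFfil.generate_inter hB hmeet) hFG]
    obtain ⟨A, hA⟩ := hFfil.1
    exact ⟨hB, A, hA, inter_subset_right⟩

end Ultrafilter

section ProdSingleton

variable {X Y : Type*} {F : Set (Set X)} {H : Set (Set (X × Y))} {y : Y}

theorem preimage_prodMk_right_mem [MeasurableSpace X] [MeasurableSpace Y]
    (hF : IsMUltrafilter {B : Set X | MeasurableSet B} F)
    (hH : IsMFilter {s : Set (X × Y) | MeasurableSet s} H)
    (hsub : ∀ A ∈ F, A ×ˢ ({y} : Set Y) ∈ H) {S : Set (X × Y)} (hS : S ∈ H) :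
    (fun x => (x, y)) ⁻¹' S ∈ F := by
  obtain ⟨-, hHS, hHempty, hHinter, -⟩ := hH
  have hSm : MeasurableSet S := hHS hS
  refine (hF.mem_or_compl_mem (hSm.preimage measurable_prodMk_right)).resolve_right
    fun hcompl => hHempty ?_
  have hdisj : ((fun x => (x, y)) ⁻¹' S)ᶜ ×ˢ ({y} : Set Y) ∩ S = ∅ := by
    ext ⟨x, y'⟩
    simp only [mem_inter_iff, mem_prod, mem_compl_iff, mem_preimage, mem_singleton_iff,
      mem_empty_iff_false, iff_false, not_and, and_imp]
    rintro hx rfl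
    exact hx
  simpa only [hdisj] using hHinter _ (hsub _ hcompl) S hS

theorem IsFree.of_prod_singleton_mem (hfree : IsFree F)
    (hsub : ∀ A ∈ F, A ×ˢ ({y} : Set Y) ∈ H) : IsFree H := by
  refine eq_empty_iff_forall_notMem.2 fun p hp => ?_
  have hx : p.1 ∈ ⋂₀ F := fun A hA => (hp _ (hsub A hA)).1
  rwa [hfree] at hx

theorem HasCIP.of_preimage_prodMk_right_mem (hcip : HasCIP F)
    (hsec : ∀ S ∈ H, (fun x => (x, y)) ⁻¹' S ∈ F) : HasCIP H := by
  intro f hf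
  obtain ⟨x, hx⟩ := hcip (fun n => (fun x => (x, y)) ⁻¹' f n) fun n => hsec _ (hf n)
  exact ⟨(x, y), mem_iInter.2 fun n => mem_iInter.1 hx n⟩

end ProdSingleton

theorem stmt14_general {X Y : Type*} [MeasurableSpace X] [MeasurableSpace Y]
    (F : Set (Set X)) (hF : IsMUltrafilter {B : Set X | MeasurableSet B} F)
    (hfree : IsFree F) (hcip : HasCIP F) (y : Y)
    (H : Set (Set (X × Y)))
    (hH : IsMUltrafilter {s : Set (X × Y) | MeasurableSet s} H)
    (hsub : ∀ A ∈ F, A ×ˢ ({y} : Set Y) ∈ H) :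
    IsFree H ∧ HasCIP H :=
  ⟨hfree.of_prod_singleton_mem hsub,
    hcip.of_preimage_prodMk_right_mem fun _ hS => preimage_prodMk_right_mem hF hH.1 hsub hS⟩

theorem stmt14 {X Y : Type*} [MeasurableSpace X] [MeasurableSpace Y]
    [MeasurableSingletonClass X] [MeasurableSingletonClass Y]
    (F : Set (Set X)) (hF : IsMUltrafilter {B : Set X | MeasurableSet B} F)
    (hfree : IsFree F) (hcip : HasCIP F) (y : Y)
    (H : Set (Set (X × Y)))
    (hH : IsMUltrafilter {s : Set (X × Y) | MeasurableSet s} H)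
    (hsub : ∀ A ∈ F, A ×ˢ ({y} : Set Y) ∈ H) :
    IsFree H ∧ HasCIP H :=
  stmt14_general F hF hfree hcip y H hH hsub
end

section
/- Let X be a completely regular topological space and B ⊆ X a subset whose boundary bd_X B is compact. Then cl_{βX} B \ X = Ex_X(int_X B) \ X, where Ex_X U = βX \ cl_{βX}(X \ U). -/
/-! The inclusion `⊇` holds because `βX = cl (int B) ∪ cl (X \ int B)`. For `⊆`, since
`X \ int B ⊆ (X \ B) ∪ K` with `K = ∂B` compact, it suffices that `cl B ∩ cl (X \ B) ⊆ K` in `βX`.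
Given `q` in that intersection but outside `K`, take a Urysohn function `f` on `βX` with `f q = 1`
and `f = 0` on `K`, and let `g = f|_X`. The function equal to `g` on `cl_X B` and to `-g` elsewhere
is continuous, since `g` vanishes on `∂B`; it is `≥ 1/2` on `B ∩ {g > 1/2}` and `≤ -1/2` on
`(X \ B) ∩ {g > 1/2}`, and `q` lies in the closure of both sets, so its extension to `βX` would
take two values at `q`. -/

open Set

theorem DenseRange.closure_image_union_closure_image_compl {X Y : Type*} [TopologicalSpace Y]
    {f : X → Y} (hf : DenseRange f) (S : Set X) :
    closure (f '' S) ∪ closure (f '' Sᶜ) = univ := by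
  rw [← closure_union, ← image_union, union_compl_self, image_univ, hf.closure_range]

section

variable {X : Type*} [TopologicalSpace X]

theorem closure_image_union_of_subset_union_isCompact {Y : Type*} [TopologicalSpace Y]
    [T2Space Y] {f : X → Y} (hf : Continuous f) {A C K : Set X} (hK : IsCompact K)
    (hAC : A ⊆ C ∪ K) : closure (f '' A) ⊆ closure (f '' C) ∪ f '' K := by
  calc closure (f '' A) ⊆ closure (f '' (C ∪ K)) := closure_mono (image_mono hAC)
    _ = closure (f '' C) ∪ f '' K := by
      rw [image_union, closure_union, (hK.image hf).isClosed.closure_eq]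

theorem disjoint_closure_image_stoneCechUnit {Y : Type*} [TopologicalSpace Y] [CompactSpace Y]
    [T2Space Y] {φ : X → Y} (hφ : Continuous φ) {A C : Set X}
    (h : Disjoint (closure (φ '' A)) (closure (φ '' C))) :
    Disjoint (closure (stoneCechUnit '' A)) (closure (stoneCechUnit '' C)) := by
  have closure_subset (T : Set X) :
      closure (stoneCechUnit '' T) ⊆ stoneCechExtend hφ ⁻¹' closure (φ '' T) := by
    refine closure_minimal ?_ (isClosed_closure.preimage (continuous_stoneCechExtend hφ))
    rintro _ ⟨x, hx, rfl⟩
    rw [mem_preimage, stoneCechExtend_stoneCechUnit]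
    exact subset_closure (mem_image_of_mem φ hx)
  exact (h.preimage _).mono (closure_subset A) (closure_subset C)

theorem disjoint_closure_image_stoneCechUnit_of_le_of_le {φ : X → ℝ} (hφ : Continuous φ)
    {A C : Set X} {a b : ℝ} (hab : a < b) (hA : ∀ x ∈ A, φ x ≤ a) (hC : ∀ x ∈ C, b ≤ φ x) :
    Disjoint (closure (stoneCechUnit '' A)) (closure (stoneCechUnit '' C)) := by
  set ψ : X → Icc a b := fun x ↦ projIcc a b hab.le (φ x)
  have hψA : ψ '' A ⊆ {⟨a, left_mem_Icc.2 hab.le⟩} := by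
    rintro _ ⟨x, hx, rfl⟩
    exact projIcc_of_le_left hab.le (hA x hx)
  have hψC : ψ '' C ⊆ {⟨b, right_mem_Icc.2 hab.le⟩} := by
    rintro _ ⟨x, hx, rfl⟩
    exact projIcc_of_right_le hab.le (hC x hx)
  refine disjoint_closure_image_stoneCechUnit (φ := ψ) (continuous_projIcc.comp hφ) ?_
  refine Disjoint.mono (closure_minimal hψA isClosed_singleton)
    (closure_minimal hψC isClosed_singleton) ?_
  rw [disjoint_singleton, Ne, Subtype.ext_iff]
  exact hab.ne

theorem closure_image_stoneCechUnit_inter_subset_image_frontier {S : Set X}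
    (hS : IsCompact (frontier S)) :
    closure (stoneCechUnit '' S) ∩ closure (stoneCechUnit '' Sᶜ) ⊆
      stoneCechUnit '' frontier S := by
  rintro q ⟨hqS, hqSc⟩
  by_contra hq
  obtain ⟨f, hf0, hf1, -⟩ := exists_continuous_zero_one_of_isClosed
    (hS.image continuous_stoneCechUnit).isClosed isClosed_singleton
    (disjoint_singleton_right.mpr hq)
  set g : X → ℝ := fun x ↦ f (stoneCechUnit x)
  have hg : Continuous g := f.continuous.comp continuous_stoneCechUnit
  have hg_frontier : ∀ x ∈ frontier S, g x = 0 := fun x hx ↦ hf0 (mem_image_of_mem _ hx)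
  set V : Set (StoneCech X) := {p | 1 / 2 < f p}
  have hV : IsOpen V := isOpen_lt continuous_const f.continuous
  have hqV : q ∈ V := by
    rw [mem_ofPred_eq, hf1 (mem_singleton q)]
    norm_num
  have mem_closure_near (T : Set X) (hT : q ∈ closure (stoneCechUnit '' T)) :
      q ∈ closure (stoneCechUnit '' (T ∩ {x | 1 / 2 < g x})) := by
    rw [← preimage_ofPred_eq (p := (1 / 2 < f ·)), image_inter_preimage, inter_comm]
    exact hV.inter_closure ⟨hqV, hT⟩
  classical
  set φ := (closure S).piecewise g (fun x ↦ -g x) with hφ_def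
  have hφ : Continuous φ := by
    refine hg.piecewise (fun x hx ↦ ?_) hg.neg
    rw [hg_frontier x (frontier_closure_subset hx), neg_zero]
  have hφS : ∀ x ∈ S ∩ {x | 1 / 2 < g x}, 1 / 2 ≤ φ x := fun x hx ↦ by
    rw [hφ_def, piecewise_eq_of_mem _ _ _ (subset_closure hx.1)]
    exact hx.2.le
  have hφSc : ∀ x ∈ Sᶜ ∩ {x | 1 / 2 < g x}, φ x ≤ -(1 / 2) := fun x hx ↦ by
    have hx_closure : x ∉ closure S := fun hxS ↦ by
      have : g x = 0 := hg_frontier x ⟨hxS, fun hxi ↦ hx.1 (interior_subset hxi)⟩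
      linarith [hx.2.out]
    rw [hφ_def, piecewise_eq_of_notMem _ _ _ hx_closure]
    exact neg_le_neg hx.2.le
  exact (disjoint_closure_image_stoneCechUnit_of_le_of_le hφ (by norm_num) hφSc hφS).ne_of_mem
    (mem_closure_near _ hqSc) (mem_closure_near _ hqS) rfl

end

theorem stmt18_general {X : Type*} [TopologicalSpace X]
    (B : Set X) (hB : IsCompact (frontier B)) :
    closure (stoneCechUnit '' B) \ Set.range (stoneCechUnit : X → StoneCech X) =
      (closure (stoneCechUnit '' (interior B)ᶜ))ᶜ \ Set.range stoneCechUnit := by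
  ext q
  refine and_congr_left fun hq ↦ ⟨fun hqB hqU ↦ hq ?_, fun hqU ↦ ?_⟩
  · have hU : (interior B)ᶜ ⊆ Bᶜ ∪ frontier B := fun x hx ↦ by
      by_cases hxB : x ∈ B
      · exact Or.inr ⟨subset_closure hxB, hx⟩
      · exact Or.inl hxB
    obtain hqBc | hqK :=
      closure_image_union_of_subset_union_isCompact continuous_stoneCechUnit hB hU hqU
    · exact image_subset_range _ _
        (closure_image_stoneCechUnit_inter_subset_image_frontier hB ⟨hqB, hqBc⟩)
    · exact image_subset_range _ _ hqK
  · have hq_cover := denseRange_stoneCechUnit.closure_image_union_closure_image_compl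
      (interior B) ▸ mem_univ q
    exact closure_mono (image_mono interior_subset) (hq_cover.resolve_right hqU)

theorem stmt18 {X : Type*} [TopologicalSpace X] [CompletelyRegularSpace X] [T2Space X]
    (B : Set X) (hB : IsCompact (frontier B)) :
    closure (stoneCechUnit '' B) \ Set.range (stoneCechUnit : X → StoneCech X) =
      (closure (stoneCechUnit '' (interior B)ᶜ))ᶜ \ Set.range stoneCechUnit :=
  stmt18_general B hB
end
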